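/- For every starting set S and every step i, the restricted Kruskal forest F_i^{G,S} and the restricted Erdős–Rényi graph G_i^S have the same connected components (the same partition of the vertex set). -/
import Mathlib


open SimpleGraph

variable {V : Type*}

/-- `ed` lists the `m` edges of `G` in increasing order of weight `w`. -/
def IsEdgeListing (G : SimpleGraph V) (w : Sym2 V → ℝ) (m : ℕ) (ed : ℕ → V × V) : Prop :=
  (∀ i < m, G.Adj (ed i).1 (ed i).2) ∧
  (∀ i j : ℕ, i < j → j < m → w s((ed i).1, (ed i).2) < w s((ed j).1, (ed j).2)) ∧
  (∀ x y : V, G.Adj x y → ∃ i < m, s((ed i).1, (ed i).2) = s(x, y))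

-- Kruskal's algorithm restricted by the starting set `S`: process the edges
-- `ed 0, ed 1, ...` in order; add an edge iff it joins distinct components and the two
-- endpoint components do not both contain elements of `S`.
open scoped Classical in
noncomputable def kruskalF (S : Set V) (ed : ℕ → V × V) : ℕ → SimpleGraph V
  | 0 => ⊥
  | i + 1 =>
    let F := kruskalF S ed i
    if (¬ F.Reachable (ed i).1 (ed i).2) ∧
        ¬ ((∃ a ∈ S, F.Reachable a (ed i).1) ∧ (∃ b ∈ S, F.Reachable b (ed i).2))
    then F ⊔ SimpleGraph.fromEdgeSet {s((ed i).1, (ed i).2)}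
    else F

-- The restricted Erdős–Rényi process: process the edges `ed 0, ed 1, ...` in order;
-- add an edge unless it joins components containing distinct elements of `S`.
open scoped Classical in
noncomputable def erGraph (S : Set V) (ed : ℕ → V × V) : ℕ → SimpleGraph V
  | 0 => ⊥
  | i + 1 =>
    let Gp := erGraph S ed i
    if ∃ a ∈ S, ∃ b ∈ S, a ≠ b ∧ Gp.Reachable a (ed i).1 ∧ Gp.Reachable b (ed i).2
    then Gp
    else Gp ⊔ SimpleGraph.fromEdgeSet {s((ed i).1, (ed i).2)}

lemma reach_sup_edge (G : SimpleGraph V) (u v x y : V) :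
    (G ⊔ SimpleGraph.fromEdgeSet {s(u, v)}).Reachable x y ↔
      G.Reachable x y ∨ (G.Reachable x u ∧ G.Reachable v y) ∨
        (G.Reachable x v ∧ G.Reachable u y) := by
  constructor
  · intro h
    obtain ⟨p⟩ := h
    induction p with
    | nil => exact Or.inl (Reachable.refl _)
    | @cons a b c hab p ih =>
      have hab' : G.Adj a b ∨ ((a = u ∧ b = v) ∨ (a = v ∧ b = u)) := by
        rcases hab with h | h
        · exact Or.inl h
        · rw [fromEdgeSet_adj, Set.mem_singleton_iff, Sym2.eq_iff] at h
          exact Or.inr h.1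
      rcases hab' with h | ⟨rfl, rfl⟩ | ⟨rfl, rfl⟩
      · rcases ih with h1 | ⟨h1, h2⟩ | ⟨h1, h2⟩
        · exact Or.inl ((Adj.reachable h).trans h1)
        · exact Or.inr (Or.inl ⟨(Adj.reachable h).trans h1, h2⟩)
        · exact Or.inr (Or.inr ⟨(Adj.reachable h).trans h1, h2⟩)
      · rcases ih with h1 | ⟨h1, h2⟩ | ⟨h1, h2⟩
        · exact Or.inr (Or.inl ⟨Reachable.refl _, h1⟩)
        · exact Or.inl (h1.symm.trans h2)
        · exact Or.inl h2
      · rcases ih with h1 | ⟨h1, h2⟩ | ⟨h1, h2⟩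
        · exact Or.inr (Or.inr ⟨Reachable.refl _, h1⟩)
        · exact Or.inl h2
        · exact Or.inl (h1.symm.trans h2)
  · have mono : ∀ a b : V, G.Reachable a b →
        (G ⊔ SimpleGraph.fromEdgeSet {s(u, v)}).Reachable a b := fun a b h =>
      h.mono le_sup_left
    rintro (h | ⟨h1, h2⟩ | ⟨h1, h2⟩)
    · exact mono _ _ h
    · by_cases huv : u = v
      · subst huv; exact mono _ _ (h1.trans h2)
      · have : (G ⊔ SimpleGraph.fromEdgeSet {s(u, v)}).Adj u v := by
          right
          rw [fromEdgeSet_adj]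
          exact ⟨rfl, huv⟩
        exact (mono _ _ h1).trans (this.reachable.trans (mono _ _ h2))
    · by_cases huv : u = v
      · subst huv; exact mono _ _ (h1.trans h2)
      · have : (G ⊔ SimpleGraph.fromEdgeSet {s(u, v)}).Adj v u := by
          right
          rw [fromEdgeSet_adj]
          exact ⟨Sym2.eq_swap ▸ rfl, Ne.symm huv⟩
        exact (mono _ _ h1).trans (this.reachable.trans (mono _ _ h2))

lemma reach_sup_edge_of_reach (G : SimpleGraph V) {u v : V} (h : G.Reachable u v) (x y : V) :
    (G ⊔ SimpleGraph.fromEdgeSet {s(u, v)}).Reachable x y ↔ G.Reachable x y := by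
  rw [reach_sup_edge]
  constructor
  · rintro (h1 | ⟨h1, h2⟩ | ⟨h1, h2⟩)
    · exact h1
    · exact (h1.trans h).trans h2
    · exact (h1.trans h.symm).trans h2
  · exact Or.inl

/-- For every starting set `S` and every step `i`, the restricted
Kruskal forest `F_i^{G,S}` and the restricted Erdős–Rényi graph `G_i^S` have the same
connected components (they induce the same partition of the vertex set). -/
theorem kruskal_er_same_components [Fintype V] [DecidableEq V] (G : SimpleGraph V)
    (w : Sym2 V → ℝ) (hw : Set.InjOn w G.edgeSet) (hG : G.Connected)
    (m : ℕ) (ed : ℕ → V × V) (hed : IsEdgeListing G w m ed) (S : Set V) :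
    ∀ i : ℕ, ∀ x y : V,
      (kruskalF S ed i).Reachable x y ↔ (erGraph S ed i).Reachable x y := by
  intro i
  induction i with
  | zero => intro x y; rfl
  | succ i IH =>
    intro x y
    set F := kruskalF S ed i with hF
    set E := erGraph S ed i with hE
    set u := (ed i).1
    set v := (ed i).2
    have hker : kruskalF S ed (i + 1) =
        @ite _ ((¬ F.Reachable u v) ∧
          ¬ ((∃ a ∈ S, F.Reachable a u) ∧ (∃ b ∈ S, F.Reachable b v)))
          (Classical.propDecidable _)
          (F ⊔ SimpleGraph.fromEdgeSet {s(u, v)}) F := by rw [kruskalF]; congr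
    have herg : erGraph S ed (i + 1) =
        @ite _ (∃ a ∈ S, ∃ b ∈ S, a ≠ b ∧ E.Reachable a u ∧ E.Reachable b v)
          (Classical.propDecidable _)
          E (E ⊔ SimpleGraph.fromEdgeSet {s(u, v)}) := by rw [erGraph]
    rw [hker, herg]
    by_cases hEc : ∃ a ∈ S, ∃ b ∈ S, a ≠ b ∧ E.Reachable a u ∧ E.Reachable b v
    · -- ER skips; Kruskal also skips
      obtain ⟨a, ha, b, hb, hab, hau, hbv⟩ := hEc
      have hKc : ¬ ((¬ F.Reachable u v) ∧
          ¬ ((∃ a ∈ S, F.Reachable a u) ∧ (∃ b ∈ S, F.Reachable b v))) := by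
        rintro ⟨-, h2⟩
        exact h2 ⟨⟨a, ha, (IH a u).mpr hau⟩, ⟨b, hb, (IH b v).mpr hbv⟩⟩
      rw [if_neg hKc, if_pos ⟨a, ha, b, hb, hab, hau, hbv⟩]
      exact IH x y
    · rw [if_neg hEc]
      by_cases hKc : (¬ F.Reachable u v) ∧
          ¬ ((∃ a ∈ S, F.Reachable a u) ∧ (∃ b ∈ S, F.Reachable b v))
      · -- both add the edge
        rw [if_pos hKc, reach_sup_edge, reach_sup_edge]
        simp only [IH]
      · -- Kruskal skips: then F.Reachable u v
        rw [if_neg hKc]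
        have hreach : F.Reachable u v := by
          by_contra hno
          apply hKc
          refine ⟨hno, ?_⟩
          rintro ⟨⟨a, ha, hau⟩, ⟨b, hb, hbv⟩⟩
          by_cases hab : a = b
          · subst hab; exact hno (hau.symm.trans hbv)
          · exact hEc ⟨a, ha, b, hb, hab, (IH a u).mp hau, (IH b v).mp hbv⟩
        rw [reach_sup_edge_of_reach E ((IH u v).mp hreach)]
        exact IH x y
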